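/- Let f_l, l ≥ 0, be probability generating functions of ℕ-valued distributions with f_l(0) < 1 and finite positive means m_l = f_l'(1), and let φ_l be the shape function of f_l. Then for all 0 ≤ k ≤ n and all s ∈ [0,1): 1/(1 − f_{k,n}(s)) = μ_k/(μ_n(1 − s)) + μ_k ∑_{l=k+1}^{n} φ_l(f_{l,n}(s))/μ_{l−1}. -/

import Mathlib

open Filter

/-- `pgfComp f lo len` is the composition `f lo ∘ f (lo+1) ∘ ⋯ ∘ f (lo+len-1)`
(the identity if `len = 0`).  In the notation of the paper,
`f_{k,n} = pgfComp f (k+1) (n-k)` for `-1 ≤ k ≤ n`. -/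
noncomputable def pgfComp (f : ℕ → ℝ → ℝ) (lo len : ℕ) : ℝ → ℝ :=
  ((List.range' lo len).map f).foldr (· ∘ ·) id

lemma pgfComp_zero (f : ℕ → ℝ → ℝ) (lo : ℕ) (s : ℝ) : pgfComp f lo 0 s = s := rfl

lemma pgfComp_succ (f : ℕ → ℝ → ℝ) (lo len : ℕ) (s : ℝ) :
    pgfComp f lo (len + 1) s = f lo (pgfComp f (lo + 1) len s) := by
  simp [pgfComp, List.range'_succ]

/-- A p.g.f. with `f l 0 < 1` maps `[0,1)` into `[0,1)`. -/
lemma pgf_maps_Ico (p : ℕ → PMF ℕ) (f : ℕ → ℝ → ℝ)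
    (hf : ∀ l, ∀ s ∈ Set.Icc (0 : ℝ) 1, f l s = ∑' k, (p l k).toReal * s ^ k)
    (hf0 : ∀ l, f l 0 < 1) :
    ∀ l, ∀ s ∈ Set.Ico (0 : ℝ) 1, f l s ∈ Set.Ico (0 : ℝ) 1 := by
  intro l s hs
  obtain ⟨hs0, hs1⟩ := hs
  have hsumP : Summable fun k : ℕ => (p l k).toReal :=
    ENNReal.summable_toReal (by rw [(p l).tsum_coe]; exact ENNReal.one_ne_top)
  have htot : ∑' k : ℕ, (p l k).toReal = 1 := by
    rw [← ENNReal.tsum_toReal_eq fun k => (p l).apply_ne_top k, (p l).tsum_coe,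
      ENNReal.toReal_one]
  have hterm : ∀ k : ℕ, (p l k).toReal * s ^ k ≤ (p l k).toReal := fun k => by
    nlinarith [pow_le_one₀ hs0 hs1.le (n := k), ENNReal.toReal_nonneg (a := p l k),
      pow_nonneg hs0 k]
  have htermnn : ∀ k : ℕ, 0 ≤ (p l k).toReal * s ^ k := fun k =>
    mul_nonneg ENNReal.toReal_nonneg (pow_nonneg hs0 k)
  have hsumf : Summable fun k : ℕ => (p l k).toReal * s ^ k :=
    Summable.of_nonneg_of_le htermnn hterm hsumP
  have hfs : f l s = ∑' k, (p l k).toReal * s ^ k := hf l s ⟨hs0, hs1.le⟩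
  have hf00 : f l 0 = (p l 0).toReal := by
    rw [hf l 0 ⟨le_refl _, zero_le_one⟩]
    rw [tsum_eq_single 0 (fun k hk => by simp [zero_pow hk])]
    simp
  have hp0 : (p l 0).toReal < 1 := hf00 ▸ hf0 l
  have hex : ∃ j : ℕ, j ≠ 0 ∧ 0 < (p l j).toReal := by
    by_contra h
    push_neg at h
    have h0 : ∀ j : ℕ, j ≠ 0 → (p l j).toReal = 0 := fun j hj =>
      le_antisymm (h j hj) ENNReal.toReal_nonneg
    have : ∑' k : ℕ, (p l k).toReal = (p l 0).toReal := tsum_eq_single (f := fun k : ℕ => (p l k).toReal) 0 (fun k hk => h0 k hk)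
    rw [this] at htot
    exact absurd htot hp0.ne
  obtain ⟨j, hj0, hjpos⟩ := hex
  constructor
  · rw [hfs]; exact tsum_nonneg htermnn
  · rw [hfs, ← htot]
    refine Summable.tsum_lt_tsum (i := j) hterm ?_ hsumf hsumP
    have : s ^ j < 1 := pow_lt_one₀ hs0 hs1 hj0
    nlinarith

/-- Let `f l` be p.g.f.s of ℕ-valued distributions with
`f_l(0) < 1` and finite positive means `m l`, and let `φ l` be the shape function
of `f l`, i.e. `1/(1 − f_l(s)) = 1/(m_l(1 − s)) + φ_l(s)` for `s ∈ [0,1)`.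
Then for all `0 ≤ k ≤ n` and `s ∈ [0,1)`:
`1/(1 − f_{k,n}(s)) = μ_k/(μ_n(1 − s)) + μ_k ∑_{l=k+1}^{n} φ_l(f_{l,n}(s))/μ_{l−1}`,
where `μ_n = m_0 ⋯ m_n`, `μ_{-1} = 1`; here `mup j` denotes `μ_{j-1}`. -/
theorem pgf_shape_function_iteration
    (p : ℕ → PMF ℕ) (f : ℕ → ℝ → ℝ) (m : ℕ → ℝ) (φ : ℕ → ℝ → ℝ)
    (hf : ∀ l, ∀ s ∈ Set.Icc (0 : ℝ) 1, f l s = ∑' k, (p l k).toReal * s ^ k)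
    (hf0 : ∀ l, f l 0 < 1)
    -- finite positive means
    (hmsum : ∀ l, Summable (fun k : ℕ => (k : ℝ) * (p l k).toReal))
    (hm : ∀ l, m l = ∑' k : ℕ, (k : ℝ) * (p l k).toReal)
    (hmpos : ∀ l, 0 < m l)
    -- the shape functions
    (hφ : ∀ l, ∀ s ∈ Set.Ico (0 : ℝ) 1,
      1 / (1 - f l s) = 1 / (m l * (1 - s)) + φ l s) :
    ∀ k n, k ≤ n → ∀ s ∈ Set.Ico (0 : ℝ) 1,
      1 / (1 - pgfComp f (k + 1) (n - k) s) =
        (∏ i ∈ Finset.range (k + 1), m i) /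
            ((∏ i ∈ Finset.range (n + 1), m i) * (1 - s)) +
          (∏ i ∈ Finset.range (k + 1), m i) *
            ∑ l ∈ Finset.Icc (k + 1) n,
              φ l (pgfComp f (l + 1) (n - l) s) / ∏ i ∈ Finset.range l, m i := by
  have hmaps := pgf_maps_Ico p f hf hf0
  have hcomp : ∀ len lo, ∀ s ∈ Set.Ico (0 : ℝ) 1, pgfComp f lo len s ∈ Set.Ico (0 : ℝ) 1 := by
    intro len
    induction len with
    | zero => intro lo s hs; simpa [pgfComp_zero] using hs
    | succ d ih =>
      intro lo s hs
      rw [pgfComp_succ]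
      exact hmaps lo _ (ih (lo + 1) s hs)
  have hprodpos : ∀ j, 0 < ∏ i ∈ Finset.range j, m i := fun j =>
    Finset.prod_pos fun i _ => hmpos i
  have key : ∀ d k n, k + d = n → ∀ s ∈ Set.Ico (0 : ℝ) 1,
      1 / (1 - pgfComp f (k + 1) d s) =
        (∏ i ∈ Finset.range (k + 1), m i) /
            ((∏ i ∈ Finset.range (n + 1), m i) * (1 - s)) +
          (∏ i ∈ Finset.range (k + 1), m i) *
            ∑ l ∈ Finset.Icc (k + 1) n,
              φ l (pgfComp f (l + 1) (n - l) s) / ∏ i ∈ Finset.range l, m i := by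
    intro d
    induction d with
    | zero =>
      intro k n hkn s hs
      obtain rfl : k = n := by omega
      have h1s : (1 : ℝ) - s ≠ 0 := by have := hs.2; intro h; linarith
      have hP : (∏ i ∈ Finset.range (k + 1), m i) ≠ 0 := (hprodpos _).ne'
      rw [pgfComp_zero, Finset.Icc_eq_empty (by omega), Finset.sum_empty, mul_zero, add_zero,
        div_mul_eq_div_div, div_self hP]
    | succ d ih =>
      intro k n hkn s hs
      obtain rfl : n = k + d + 1 := by omega
      have ht : pgfComp f (k + 2) d s ∈ Set.Ico (0 : ℝ) 1 := hcomp d (k + 2) s hs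
      have IH := ih (k + 1) (k + d + 1) (by omega) s hs
      have h1s : (1 : ℝ) - s ≠ 0 := by have := hs.2; intro h; linarith
      have h1t : (1 : ℝ) - pgfComp f (k + 2) d s ≠ 0 := by have := ht.2; intro h; linarith
      have hmne : m (k + 1) ≠ 0 := (hmpos _).ne'
      have hA : (∏ i ∈ Finset.range (k + 1), m i) ≠ 0 := (hprodpos _).ne'
      have hM : (∏ i ∈ Finset.range (k + d + 1 + 1), m i) ≠ 0 := (hprodpos _).ne'
      have hBA : (∏ i ∈ Finset.range (k + 1 + 1), m i)
          = (∏ i ∈ Finset.range (k + 1), m i) * m (k + 1) := Finset.prod_range_succ m (k + 1)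
      rw [pgfComp_succ]
      rw [hφ (k + 1) _ ht]
      have hsplit : Finset.Icc (k + 1) (k + d + 1)
          = insert (k + 1) (Finset.Icc (k + 2) (k + d + 1)) := by
        ext x; simp only [Finset.mem_Icc, Finset.mem_insert]; omega
      rw [hsplit, Finset.sum_insert (by simp)]
      simp only [show k + d + 1 - (k + 1) = d from by omega]
      have hstep : 1 / (m (k + 1) * (1 - pgfComp f (k + 2) d s)) =
          (∏ i ∈ Finset.range (k + 1), m i) /
              ((∏ i ∈ Finset.range (k + d + 1 + 1), m i) * (1 - s)) +
            (∏ i ∈ Finset.range (k + 1), m i) *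
              ∑ l ∈ Finset.Icc (k + 2) (k + d + 1),
                φ l (pgfComp f (l + 1) (k + d + 1 - l) s) / ∏ i ∈ Finset.range l, m i := by
        have e : 1 / (m (k + 1) * (1 - pgfComp f (k + 2) d s))
            = (1 / (1 - pgfComp f (k + 2) d s)) / m (k + 1) := by
          field_simp
        rw [e, IH, hBA]
        field_simp
      rw [hstep]
      rw [mul_add, mul_div_cancel₀ _ hA]
      ring
  intro k n hkn s hs
  have := key (n - k) k n (by omega) s hs
  exact this
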